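/- arXiv:2210.02636 — 2 statements merged into one kernel-verified Lean document; each statement's English description precedes it below -/
import Mathlib

section
/- The Shrikhande graph S — the simple graph on vertex set (ZMod 4) × (ZMod 4) in which u and v are adjacent if and only if u − v ∈ {(1,0), (3,0), (0,1), (0,3), (1,1), (3,3)} — is strongly regular with parameters (16, 6, 2, 2): it has 16 vertices, is 6-regular, every pair of adjacent vertices has exactly 2 common neighbors, and every pair of distinct non-adjacent vertices has exactly 2 common neighbors. -/
open SimpleGraph

/-- The connection set of the Shrikhande graph. -/
def shrikhandeSet : Finset (ZMod 4 × ZMod 4) :=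
  {(1, 0), (3, 0), (0, 1), (0, 3), (1, 1), (3, 3)}

private lemma shrikhande_symm : ∀ u v : ZMod 4 × ZMod 4,
    u - v ∈ shrikhandeSet → v - u ∈ shrikhandeSet := by decide

private lemma shrikhande_irrefl : ∀ u : ZMod 4 × ZMod 4, u - u ∉ shrikhandeSet := by decide

/-- The Shrikhande graph: vertices are `(ZMod 4) × (ZMod 4)` and `u` is adjacent to `v`
iff `u - v ∈ {(1,0), (3,0), (0,1), (0,3), (1,1), (3,3)}`. -/
def shrikhandeGraph : SimpleGraph (ZMod 4 × ZMod 4) where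
  Adj u v := u - v ∈ shrikhandeSet
  symm := ⟨fun u v h => shrikhande_symm u v h⟩
  loopless := ⟨fun u h => shrikhande_irrefl u h⟩

instance : DecidableRel shrikhandeGraph.Adj := fun u v =>
  inferInstanceAs (Decidable (u - v ∈ shrikhandeSet))

/-! The Shrikhande graph is the Cayley graph of `ZMod 4 × ZMod 4` with a connection set `S`.
Translating by `v`, the common neighbours `x` of `v` and `w` correspond to the `s = v - x ∈ S`
with `s - (v - w) ∈ S`, so their number depends only on `v - w`; the counts for the sixteen
possible differences are checked by computation. -/

namespace SimpleGraph

variable {G : Type*} [AddCommGroup G] [Fintype G] [DecidableEq G]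
  {H : SimpleGraph G} [DecidableRel H.Adj] {S : Finset G}

theorem neighborFinset_eq_image_of_adj_iff_sub_mem (hadj : ∀ u v, H.Adj u v ↔ u - v ∈ S)
    (v : G) : H.neighborFinset v = S.image (v - ·) := by
  ext x
  simp only [mem_neighborFinset, hadj, Finset.mem_image]
  exact ⟨fun h => ⟨v - x, h, sub_sub_cancel v x⟩, by rintro ⟨s, hs, rfl⟩; rwa [sub_sub_cancel]⟩

theorem isRegularOfDegree_of_adj_iff_sub_mem (hadj : ∀ u v, H.Adj u v ↔ u - v ∈ S) :
    H.IsRegularOfDegree S.card := fun v => by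
  rw [← card_neighborFinset_eq_degree, neighborFinset_eq_image_of_adj_iff_sub_mem hadj,
    Finset.card_image_of_injective _ sub_right_injective]

theorem card_commonNeighbors_of_adj_iff_sub_mem (hadj : ∀ u v, H.Adj u v ↔ u - v ∈ S)
    (v w : G) :
    Fintype.card (H.commonNeighbors v w) = (S.filter (fun s => s - (v - w) ∈ S)).card := by
  have hw (x : G) : w - x = (v - x) - (v - w) := by abel
  rw [← Fintype.card_coe]
  exact Fintype.card_congr
    { toFun := fun x => ⟨v - x, Finset.mem_filter.2 <| by
        simpa only [mem_commonNeighbors, hadj, hw] using x.2⟩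
      invFun := fun s => ⟨v - s, by
        simpa only [mem_commonNeighbors, hadj, hw, sub_sub_cancel] using Finset.mem_filter.1 s.2⟩
      left_inv := fun x => Subtype.ext (sub_sub_cancel v x)
      right_inv := fun s => Subtype.ext (sub_sub_cancel v s) }

theorem isSRGWith_of_adj_iff_sub_mem {n k ℓ μ : ℕ} (hadj : ∀ u v, H.Adj u v ↔ u - v ∈ S)
    (hn : Fintype.card G = n) (hk : S.card = k)
    (hℓ : ∀ d ∈ S, (S.filter (fun s => s - d ∈ S)).card = ℓ)
    (hμ : ∀ d ≠ 0, d ∉ S → (S.filter (fun s => s - d ∈ S)).card = μ) :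
    H.IsSRGWith n k ℓ μ where
  card := hn
  regular := hk ▸ isRegularOfDegree_of_adj_iff_sub_mem hadj
  of_adj v w h := by
    rw [card_commonNeighbors_of_adj_iff_sub_mem hadj]
    exact hℓ _ ((hadj v w).1 h)
  of_not_adj v w hne h := by
    rw [card_commonNeighbors_of_adj_iff_sub_mem hadj]
    exact hμ _ (sub_ne_zero.2 hne) (mt (hadj v w).2 h)

end SimpleGraph

theorem stmt6 : shrikhandeGraph.IsSRGWith 16 6 2 2 :=
  isSRGWith_of_adj_iff_sub_mem (fun _ _ => Iff.rfl) rfl rfl (by decide) (by decide)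
end

section
/- The Shrikhande graph S is not isomorphic to the 4×4 rook's graph R: there is no graph isomorphism between the simple graph on (ZMod 4) × (ZMod 4) with u ~ v iff u − v ∈ {(1,0), (3,0), (0,1), (0,3), (1,1), (3,3)} and the simple graph on Fin 4 × Fin 4 with (a,b) ~ (c,d) iff (a,b) ≠ (c,d) and (a = c or b = d), even though both are strongly regular with the same parameters (16, 6, 2, 2). -/
open SimpleGraph

/-- The 4×4 rook's graph: vertices are `Fin 4 × Fin 4` and `(a,b)` is adjacent to `(c,d)`
iff `(a,b) ≠ (c,d)` and (`a = c` or `b = d`). -/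
def rookGraph : SimpleGraph (Fin 4 × Fin 4) where
  Adj x y := x ≠ y ∧ (x.1 = y.1 ∨ x.2 = y.2)
  symm := ⟨fun _ _ ⟨h1, h2⟩ => ⟨h1.symm, h2.imp Eq.symm Eq.symm⟩⟩
  loopless := ⟨fun _ h => h.1 rfl⟩

instance : DecidableRel rookGraph.Adj := fun x y =>
  inferInstanceAs (Decidable (x ≠ y ∧ (x.1 = y.1 ∨ x.2 = y.2)))

/-!
Both graphs are strongly regular with parameters `(16, 6, 2, 2)` by a finite check. They are
told apart by `4`-cliques: each row of the rook's graph is one, whereas the Shrikhande graph is a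
Cayley graph, so translating a `4`-clique to contain `0` would leave three pairwise adjacent
elements of the connection set, which spans a hexagon.
-/

lemma shrikhandeGraph_isSRGWith : shrikhandeGraph.IsSRGWith 16 6 2 2 where
  card := by decide
  regular := by unfold IsRegularOfDegree; decide
  of_adj := by decide
  of_not_adj := by unfold Pairwise; decide

lemma rookGraph_isSRGWith : rookGraph.IsSRGWith 16 6 2 2 where
  card := by decide
  regular := by unfold IsRegularOfDegree; decide
  of_adj := by decide
  of_not_adj := by unfold Pairwise; decide

lemma shrikhandeSet_triangleFree : ∀ a ∈ shrikhandeSet, ∀ b ∈ shrikhandeSet, ∀ c ∈ shrikhandeSet,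
    ¬(a - b ∈ shrikhandeSet ∧ a - c ∈ shrikhandeSet ∧ b - c ∈ shrikhandeSet) := by
  decide

lemma shrikhandeGraph_cliqueFree_four : shrikhandeGraph.CliqueFree 4 := by
  refine cliqueFree_iff.mpr ⟨fun f => ?_⟩
  have hadj (i j : Fin 4) (hij : i ≠ j) : f i - f j ∈ shrikhandeSet :=
    f.toHom.map_adj hij
  have hsub (i j : Fin 4) (hij : i ≠ j) : (f i - f 0) - (f j - f 0) ∈ shrikhandeSet := by
    rw [sub_sub_sub_cancel_right]
    exact hadj i j hij
  exact shrikhandeSet_triangleFree _ (hadj 1 0 (by decide)) _ (hadj 2 0 (by decide))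
    _ (hadj 3 0 (by decide)) ⟨hsub 1 2 (by decide), hsub 1 3 (by decide), hsub 2 3 (by decide)⟩

lemma rookGraph_not_cliqueFree_four : ¬rookGraph.CliqueFree 4 :=
  fun h => h {(0, 0), (0, 1), (0, 2), (0, 3)} (by decide)

theorem stmt9 :
    shrikhandeGraph.IsSRGWith 16 6 2 2 ∧ rookGraph.IsSRGWith 16 6 2 2 ∧
      IsEmpty (shrikhandeGraph ≃g rookGraph) :=
  ⟨shrikhandeGraph_isSRGWith, rookGraph_isSRGWith, ⟨fun e =>
    rookGraph_not_cliqueFree_four (shrikhandeGraph_cliqueFree_four.comap e.isContained')⟩⟩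
end
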